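/- arXiv:2512.25039 — 2 statements merged into one kernel-verified Lean document; each statement's English description precedes it below -/
import Mathlib

section
/- For every odd positive integer k and every l ≥ 1, one has N_{k+1, l} = N_{k, l}, where N_{k,l} is the signed number of ways to choose one entry in each row of a k × l matrix. -/
/-!
The sign of `σ_c` is the sign of the inversions of `c` itself, ties not counted. Splitting off
the first two rows, with entries `a` and `b`, the sign factors as `ε(b < a) · w a · w b · sgn t`,
where `t` is the rest of `c` and `w x = ±1` depends only on `t`. Summing over `a` and `b`, the
pairs `(a, b)` and `(b, a)` with `a ≠ b` cancel and the diagonal contributes `l`; hence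
`N (k + 2) l = l * N k l`, and with `N 0 l = 1`, `N 1 l = l` both `N (2m) l` and `N (2m - 1) l`
equal `l ^ m`.
-/

/-- The permutation (as a ranking function) associated to a choice `c` of one
column in each of the `k` rows of a `k × l` matrix: `σ_c i` is the number of
indices `m` with `c m < c i`, or `c m = c i` and `m ≤ i`. -/
def sigmaC {k l : ℕ} (c : Fin k → Fin l) (i : Fin k) : ℕ :=
  (Finset.univ.filter (fun m => c m < c i ∨ (c m = c i ∧ m ≤ i))).card

/-- The sign of `σ_c`, computed as the parity of its number of inversions. -/
def sgnC {k l : ℕ} (c : Fin k → Fin l) : ℤ :=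
  (-1) ^ ((Finset.univ.filter
    (fun p : Fin k × Fin k => p.1 < p.2 ∧ sigmaC c p.2 < sigmaC c p.1)).card)

/-- `N k l`: the signed count of ways to choose one entry in each row of a
`k × l` matrix. -/
def N (k l : ℕ) : ℤ := ∑ c : Fin k → Fin l, sgnC c

open Finset

theorem Finset.card_filter_le_lt_card_filter_le_iff {ι β : Type*} [Fintype ι] [LinearOrder β]
    (f : ι → β) {i j : ι} : #{m | f m ≤ f i} < #{m | f m ≤ f j} ↔ f i < f j := by
  have hmono : ∀ {i j}, f i ≤ f j →
      ({m | f m ≤ f i} : Finset ι) ⊆ ({m | f m ≤ f j} : Finset ι) :=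
    fun h => monotone_filter_right _ fun _ _ hm => hm.trans h
  constructor
  · contrapose!
    exact fun h => card_le_card (hmono h)
  · intro h
    refine card_lt_card ((ssubset_iff_of_subset (hmono h.le)).2 ⟨j, ?_, ?_⟩) <;> simp [h]

theorem Fin.sum_univ_fun_succ {M α : Type*} [AddCommMonoid M] [Fintype α] {n : ℕ}
    (f : (Fin (n + 1) → α) → M) : ∑ c, f c = ∑ a, ∑ g, f (Fin.cons a g) := by
  rw [← Fintype.sum_prod_type']
  exact (Fintype.sum_equiv (Fin.consEquiv fun _ => α) _ _ fun _ => rfl).symm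

/-- Adding the sum to its transpose, the signs of `(a, b)` and `(b, a)` cancel off the diagonal. -/
theorem sum_sum_ite_lt_mul_of_symm {α : Type*} [Fintype α] [LinearOrder α] (f : α → α → ℤ)
    (hf : ∀ a b, f a b = f b a) :
    ∑ a, ∑ b, (if b < a then -1 else 1) * f a b = ∑ a, f a a := by
  have hswap : ∑ a, ∑ b, (if b < a then -1 else 1) * f a b =
      ∑ a, ∑ b, (if a < b then -1 else 1) * f a b := by
    rw [sum_comm]
    simp only [hf]
  have hpair : ∀ a b : α, ((if b < a then -1 else 1) + (if a < b then -1 else 1)) * f a b =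
      if a = b then 2 * f a b else 0 := by
    intro a b
    rcases lt_trichotomy a b with h | rfl | h
    · simp [h, h.ne, h.not_gt]
    · simp
    · simp [h, h.ne', h.not_gt]
  suffices 2 * ∑ a, ∑ b, (if b < a then -1 else 1) * f a b = 2 * ∑ a, f a a by omega
  calc 2 * ∑ a, ∑ b, (if b < a then -1 else 1) * f a b
      = ∑ a, ∑ b, ((if b < a then -1 else 1) + (if a < b then -1 else 1)) * f a b := by
        rw [two_mul]
        nth_rw 2 [hswap]
        simp only [← sum_add_distrib, add_mul]
    _ = 2 * ∑ a, f a a := by simp only [hpair, sum_ite_eq, mem_univ, if_true, mul_sum]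

section LinearOrder

variable {k : ℕ} {α : Type*} [LinearOrder α]

/-- Ties in `c` are not inversions, because `σ_c` breaks them by the index. -/
def inversionSign (c : Fin k → α) : ℤ :=
  ∏ p : Fin k × Fin k, if p.1 < p.2 ∧ c p.2 < c p.1 then -1 else 1

def belowSign (t : Fin k → α) (x : α) : ℤ :=
  ∏ j, if t j < x then -1 else 1

theorem belowSign_cons (b : α) (t : Fin k → α) (x : α) :
    belowSign (Fin.cons b t : Fin (k + 1) → α) x = (if b < x then -1 else 1) * belowSign t x := by
  simp [belowSign, Fin.prod_univ_succ]

theorem belowSign_mul_self (t : Fin k → α) (x : α) : belowSign t x * belowSign t x = 1 := by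
  rw [belowSign, ← prod_mul_distrib]
  exact prod_eq_one fun j _ => by split_ifs <;> norm_num

theorem inversionSign_cons (a : α) (g : Fin k → α) :
    inversionSign (Fin.cons a g : Fin (k + 1) → α) = belowSign g a * inversionSign g := by
  simp [inversionSign, belowSign, Fintype.prod_prod_type, Fin.prod_univ_succ, Fin.succ_lt_succ_iff]

end LinearOrder

theorem sigmaC_eq_card_lex {k l : ℕ} (c : Fin k → Fin l) (i : Fin k) :
    sigmaC c i = #{m | toLex (c m, m) ≤ toLex (c i, i)} := by
  simp only [sigmaC, Prod.Lex.toLex_le_toLex]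

theorem sigmaC_lt_sigmaC_iff {k l : ℕ} (c : Fin k → Fin l) {i j : Fin k} (hij : i < j) :
    sigmaC c j < sigmaC c i ↔ c j < c i := by
  rw [sigmaC_eq_card_lex, sigmaC_eq_card_lex, card_filter_le_lt_card_filter_le_iff,
    Prod.Lex.toLex_lt_toLex]
  simp [hij.not_gt]

theorem sgnC_eq_inversionSign {k l : ℕ} (c : Fin k → Fin l) : sgnC c = inversionSign c := by
  rw [inversionSign, ← prod_filter, prod_const, sgnC]
  congr 2
  exact filter_congr fun p _ => and_congr_right (sigmaC_lt_sigmaC_iff c)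

theorem N_eq_sum_inversionSign (k l : ℕ) : N k l = ∑ c : Fin k → Fin l, inversionSign c := by
  simp only [N, sgnC_eq_inversionSign]

theorem N_add_two (k l : ℕ) : N (k + 2) l = l * N k l := by
  have hrows : ∀ t : Fin k → Fin l, ∑ a, ∑ b,
      (if b < a then -1 else 1) * (belowSign t a * belowSign t b * inversionSign t) =
        l * inversionSign t := by
    intro t
    rw [sum_sum_ite_lt_mul_of_symm _ fun a b => by ring]
    simp [mul_comm, belowSign_mul_self]
  simp only [N_eq_sum_inversionSign, Fin.sum_univ_fun_succ (n := k + 1),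
    Fin.sum_univ_fun_succ (n := k), inversionSign_cons, belowSign_cons, mul_sum, ← hrows]
  rw [sum_comm (s := (univ : Finset (Fin k → Fin l)))]
  refine sum_congr rfl fun a _ => ?_
  rw [sum_comm (s := (univ : Finset (Fin k → Fin l)))]
  simp only [mul_assoc]

theorem N_zero (l : ℕ) : N 0 l = 1 := by
  simp [N_eq_sum_inversionSign, inversionSign]

theorem N_one (l : ℕ) : N 1 l = l := by
  simp [N_eq_sum_inversionSign, inversionSign, Fintype.prod_prod_type]

theorem N_two_mul (m l : ℕ) : N (2 * m) l = l ^ m := by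
  induction m with
  | zero => exact N_zero l
  | succ m ih => rw [Nat.mul_succ, N_add_two, ih, pow_succ']

theorem N_two_mul_add_one (m l : ℕ) : N (2 * m + 1) l = l ^ (m + 1) := by
  induction m with
  | zero => simpa using N_one l
  | succ m ih =>
    rw [show 2 * (m + 1) + 1 = 2 * m + 1 + 2 by ring, N_add_two, ih, pow_succ' _ (m + 1)]

theorem N_succ_eq_of_odd_general (k l : ℕ) (hk : Odd k) :
    N (k + 1) l = N k l := by
  obtain ⟨m, rfl⟩ := hk
  rw [show 2 * m + 1 + 1 = 2 * (m + 1) by ring, N_two_mul, N_two_mul_add_one]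

theorem N_succ_eq_of_odd (k l : ℕ) (hk : Odd k) (hkpos : 0 < k) (hl : 1 ≤ l) :
    N (k + 1) l = N k l :=
  N_succ_eq_of_odd_general k l hk
end

section
/- Let A be a k-algebra with an automorphism t of order dividing n (e.g. the cyclic permutation on A^{⊗n}). Then the composite ν∘ξ where ξ is first the symmetrization [x] ↦ (1/|G|)Σ_{h ∈ G} h·x followed by Σ_g ξ_g, and ν is the untwisting chain map, equals the identity on the coinvariant complex (⊕_{g ∈ G} C_•(A; A_g))_G. -/
/-! The group components of `ξ_g(a)` are `g⁻¹, 1, …, 1`, so untwisting only undoes the twist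
`g⁻¹` of `a_0`: `ν ∘ ξ_g` sends `a` back to itself in the summand `g`. Conjugating `g` by `h`
and applying `h` to `a` therefore yields the translate `h · [a]`, and the symmetrized sum is the
average over `G` of translates, all of which have the class of `[a]` in the coinvariants. -/

open scoped TensorProduct
open PiTensorProduct

section

variable (k : Type) [CommRing k] (A : Type) [Ring A] [Algebra k A]
variable (G : Type) [Group G] [Fintype G] [DecidableEq G]
variable (act : G →* (A ≃ₐ[k] A))

/-- The Hochschild-type differential evaluated on an elementary `(m+1)`-tuple:
the alternating sum of the face maps (merging adjacent entries using the
multiplication `mulB`) together with the cyclic face, in which the last entry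
is first twisted by `tw` and then multiplied onto the zeroth entry. -/
noncomputable def tupleD {B : Type} [AddCommGroup B] [Module k B]
    (mulB : B → B → B) (tw : B → B) {m : ℕ} (v : Fin (m + 1) → B) :
    ⨂[k]^m B :=
  (∑ i : Fin m, ((-1 : ℤ) ^ (i : ℕ)) •
      tprod k (fun j : Fin m =>
        if (j : ℕ) < (i : ℕ) then v (Fin.castSucc j)
        else if (j : ℕ) = (i : ℕ) then mulB (v (Fin.castSucc j)) (v (Fin.succ j))
        else v (Fin.succ j)))
  + ((-1 : ℤ) ^ m) •
      tprod k (fun j : Fin m =>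
        if (j : ℕ) = 0 then mulB (tw (v (Fin.last m))) (v 0)
        else v (Fin.castSucc j))

/-- `tailProd x j = σ_j ⋯ σ_m`, the ordered product of the group components of
an elementary chain from position `j` on. -/
def tailProd {m : ℕ} (x : Fin m → A × G) (j : ℕ) : G :=
  ((List.ofFn fun i => (x i).2).drop j).prod

/-- The untwisting map `ν` on an elementary Hochschild chain of `A ⋊ G`:
`(a_0, σ_0) ⊗ ⋯ ⊗ (a_m, σ_m)` is sent to
`(σ_0⋯σ_m)⁻¹(a_0) ⊗ ⋯ ⊗ σ_m⁻¹(a_m)` in the summand `g = (σ_0⋯σ_m)⁻¹`. -/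
noncomputable def nuTup {m : ℕ} (x : Fin (m + 1) → A × G) :
    G → ⨂[k]^(m + 1) A :=
  fun g => if g = (tailProd A G x 0)⁻¹
    then tprod k (fun j : Fin (m + 1) => act ((tailProd A G x (j : ℕ))⁻¹) ((x j).1))
    else 0

/-- The `G`-action on `⊕_{g ∈ G} C_•(A; A_g)`. -/
noncomputable def gact {ℓ : ℕ} (h : G) (f : G → ⨂[k]^ℓ A) : G → ⨂[k]^ℓ A :=
  fun g => PiTensorProduct.map (fun _ => (act h).toLinearMap) (f (h⁻¹ * g * h))

/-- The submodule by which one quotients to obtain the `G`-coinvariants of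
`⊕_{g ∈ G} C_•(A; A_g)`. -/
noncomputable def coinvSub (ℓ : ℕ) : Submodule k (G → ⨂[k]^ℓ A) :=
  Submodule.span k {x | ∃ (h : G) (f : G → ⨂[k]^ℓ A), x = f - gact k A G act h f}

/-- `ξ_g` on an elementary chain, written with values in elementary pairs of
`A ⋊ G`: `a_0 ⊗ ⋯ ⊗ a_m ↦ (g⁻¹(a_0), g⁻¹) ⊗ (a_1, 1) ⊗ ⋯ ⊗ (a_m, 1)`. -/
def xiPair (g : G) {m : ℕ} (a : Fin (m + 1) → A) : Fin (m + 1) → A × G :=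
  fun j => if (j : ℕ) = 0 then (act g⁻¹ (a 0), g⁻¹) else (a j, 1)

end

section

variable {k : Type} [CommRing k] {A : Type} [Ring A] [Algebra k A] {G : Type} [Group G]
  {act : G →* (A ≃ₐ[k] A)}

lemma tailProd_xiPair (g : G) {m : ℕ} (a : Fin (m + 1) → A) (j : ℕ) :
    tailProd A G (xiPair k A G act g a) j = if j = 0 then g⁻¹ else 1 := by
  have hlist : (List.ofFn fun i => (xiPair k A G act g a i).2) = g⁻¹ :: List.replicate m 1 := by
    simp [List.ofFn_succ, xiPair]
  rw [tailProd, hlist]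
  cases j <;> simp [List.drop_replicate]

lemma mk_gact (h : G) {ℓ : ℕ} (f : G → ⨂[k]^ℓ A) :
    Submodule.Quotient.mk (p := coinvSub k A G act ℓ) (gact k A G act h f)
      = Submodule.Quotient.mk (p := coinvSub k A G act ℓ) f := by
  rw [Submodule.Quotient.eq, ← neg_sub]
  exact neg_mem (Submodule.subset_span ⟨h, f, rfl⟩)

lemma mk_average_gact [Fintype G] [Invertible (Fintype.card G : k)] {ℓ : ℕ}
    (f : G → ⨂[k]^ℓ A) :
    Submodule.Quotient.mk (p := coinvSub k A G act ℓ)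
      (⅟(Fintype.card G : k) • ∑ h : G, gact k A G act h f)
      = Submodule.Quotient.mk (p := coinvSub k A G act ℓ) f := by
  rw [Submodule.Quotient.mk_smul, ← Submodule.mkQ_apply, map_sum]
  simp only [Submodule.mkQ_apply, mk_gact, Finset.sum_const, Finset.card_univ]
  rw [← Nat.cast_smul_eq_nsmul k, invOf_smul_smul]

variable [DecidableEq G]

lemma nuTup_xiPair (g : G) {m : ℕ} (a : Fin (m + 1) → A) :
    nuTup k A G act (xiPair k A G act g a) = Pi.single g (tprod k a) := by
  funext w
  rw [nuTup, Pi.single_apply, tailProd_xiPair, if_pos rfl, inv_inv]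
  congr 2 with j
  rw [tailProd_xiPair]
  cases j using Fin.cases <;> simp [xiPair]

lemma gact_single (h g : G) {ℓ : ℕ} (x : ⨂[k]^ℓ A) :
    gact k A G act h (Pi.single g x)
      = Pi.single (h * g * h⁻¹) (PiTensorProduct.map (fun _ => (act h).toLinearMap) x) := by
  funext w
  have hconj : h⁻¹ * w * h = g ↔ w = h * g * h⁻¹ := by
    constructor <;> rintro rfl <;> group
  simp only [gact, Pi.single_apply, hconj]
  split_ifs <;> simp

end

section

variable (k : Type) [CommRing k] (A : Type) [Ring A] [Algebra k A]
variable (G : Type) [Group G] [Fintype G] [DecidableEq G]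
variable (act : G →* (A ≃ₐ[k] A))

/-- The composite `ν ∘ ξ`, where `ξ` is the symmetrization
`[x] ↦ (1/|G|) Σ_{h ∈ G} h·x` followed by `Σ_g ξ_g` and `ν` is the untwisting
chain map, is the identity on the `G`-coinvariants
`(⊕_{g ∈ G} C_•(A; A_g))_G`: on the class of an elementary chain `a` in the
summand `g`, the result is again the class of that elementary chain. -/
theorem nu_comp_xi_eq_id (hG : Invertible ((Fintype.card G : k)))
    (m : ℕ) (g : G) (a : Fin (m + 1) → A) :
    Submodule.Quotient.mk (p := coinvSub k A G act (m + 1))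
      (⅟(Fintype.card G : k) •
        ∑ h : G, nuTup k A G act (xiPair k A G act (h * g * h⁻¹) (fun j => act h (a j))))
    = Submodule.Quotient.mk (p := coinvSub k A G act (m + 1))
      (fun g' => if g' = g then tprod k a else 0) := by
  have hsingle : (fun g' => if g' = g then tprod k a else 0) = Pi.single g (tprod k a) := by
    funext g'
    rw [Pi.single_apply]
  have htranslate (h : G) : nuTup k A G act (xiPair k A G act (h * g * h⁻¹) (fun j => act h (a j)))
      = gact k A G act h (Pi.single g (tprod k a)) := by
    rw [nuTup_xiPair, gact_single, PiTensorProduct.map_tprod]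
    rfl
  simp only [htranslate, hsingle]
  exact mk_average_gact _

end
end
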